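/- arXiv:2505.11104 — 5 statements merged into one kernel-verified Lean document; each statement's English description precedes it below -/
import Mathlib

section
/- Coarse correction gives a descent direction (Lemma 2.1): if g is convex, R = Pᵀ, and x⁺ ∈ ℝ^N satisfies ψ(x⁺) < ψ(x_k), then the direction d = P(x⁺ − x_k) satisfies ⟨∇f(y_k), d⟩ ≤ ψ(x⁺) − ψ(x_k) < 0; in particular d is a descent direction for f at y_k. -/
open scoped RealInnerProductSpace

open Set AffineMap

/- Restricting `f` to the segment `t ↦ lineMap x y t` gives a convex function of one real variable
whose derivative at `0` is `f' (y - x)` and whose secant slope over `[0, 1]` is `f y - f x`. -/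
theorem ConvexOn.hasFDerivAt_apply_sub_le {E : Type*} [NormedAddCommGroup E] [NormedSpace ℝ E]
    {s : Set E} {f : E → ℝ} {f' : E →L[ℝ] ℝ} {x y : E}
    (hf : ConvexOn ℝ s f) (hx : x ∈ s) (hy : y ∈ s) (hf' : HasFDerivAt f f' x) :
    f' (y - x) ≤ f y - f x := by
  set ℓ : ℝ →ᵃ[ℝ] E := lineMap x y
  have hℓ0 : ℓ 0 = x := lineMap_apply_zero x y
  have hℓ1 : ℓ 1 = y := lineMap_apply_one x y
  have hconv : ConvexOn ℝ (ℓ ⁻¹' s) (f ∘ ℓ) := hf.comp_affineMap ℓ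
  have hderiv : HasDerivAt (f ∘ ℓ) (f' (y - x)) 0 := by
    refine HasFDerivAt.comp_hasDerivAt (0 : ℝ) ?_ hasDerivAt_lineMap
    rwa [hℓ0]
  simpa [slope, hℓ0, hℓ1] using hconv.le_slope_of_hasDerivAt (x := 0) (y := 1)
    (by rwa [mem_preimage, hℓ0]) (by rwa [mem_preimage, hℓ1]) one_pos hderiv

theorem ConvexOn.inner_gradient_sub_le {F : Type*} [NormedAddCommGroup F] [InnerProductSpace ℝ F]
    [CompleteSpace F] {s : Set F} {f : F → ℝ} {f' x y : F}
    (hf : ConvexOn ℝ s f) (hx : x ∈ s) (hy : y ∈ s) (hf' : HasGradientAt f f' x) :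
    ⟪f', y - x⟫ ≤ f y - f x :=
  hf.hasFDerivAt_apply_sub_le hx hy hf'.hasFDerivAt

theorem coarse_correction_descent_direction_general
    (n N : ℕ)
    (f : EuclideanSpace ℝ (Fin n) → ℝ) (g : EuclideanSpace ℝ (Fin N) → ℝ)
    (hg : Differentiable ℝ g)
    (hgconv : ConvexOn ℝ Set.univ g)
    (P : EuclideanSpace ℝ (Fin N) →L[ℝ] EuclideanSpace ℝ (Fin n))
    (R : EuclideanSpace ℝ (Fin n) →L[ℝ] EuclideanSpace ℝ (Fin N))
    (hR : R = ContinuousLinearMap.adjoint P)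
    (yk : EuclideanSpace ℝ (Fin n))
    (xk : EuclideanSpace ℝ (Fin N))
    (v : EuclideanSpace ℝ (Fin N)) (hv : v = R (gradient f yk) - gradient g xk)
    (ψ : EuclideanSpace ℝ (Fin N) → ℝ)
    (hψ : ∀ x, ψ x = g x + ⟪v, x - xk⟫)
    (xplus : EuclideanSpace ℝ (Fin N)) (hxplus : ψ xplus < ψ xk)
    (d : EuclideanSpace ℝ (Fin n)) (hd : d = P (xplus - xk)) :
    ⟪gradient f yk, d⟫ ≤ ψ xplus - ψ xk ∧ ψ xplus - ψ xk < 0 := by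
  have hmodel : ψ xplus - ψ xk = g xplus - g xk + ⟪v, xplus - xk⟫ := by
    simp only [hψ, sub_self, inner_zero_right]
    ring
  -- The correction `v` makes `ψ` first-order coherent with `f`: `∇ψ(x_k) = R ∇f(y_k)`.
  have hcoherent : ⟪gradient f yk, d⟫ = ⟪gradient g xk, xplus - xk⟫ + ⟪v, xplus - xk⟫ := by
    rw [hd, ← ContinuousLinearMap.adjoint_inner_left, ← hR, hv, inner_sub_left]
    ring
  have hsupport := hgconv.inner_gradient_sub_le (mem_univ xk) (mem_univ xplus)
    (hg xk).hasGradientAt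
  exact ⟨by linarith, by linarith⟩

/-- Coarse correction gives a descent direction (Lemma 2.1): if `g` is convex, `R = Pᵀ`,
and `x⁺` satisfies `ψ(x⁺) < ψ(x_k)`, then the direction `d = P(x⁺ − x_k)` satisfies
`⟪∇f(y_k), d⟫ ≤ ψ(x⁺) − ψ(x_k) < 0`; in particular `d` is a descent direction for `f`. -/
theorem coarse_correction_descent_direction
    (n N : ℕ) (hn : 0 < n) (hN : 0 < N)
    (f : EuclideanSpace ℝ (Fin n) → ℝ) (g : EuclideanSpace ℝ (Fin N) → ℝ)
    (hf : Differentiable ℝ f) (hg : Differentiable ℝ g)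
    (hgconv : ConvexOn ℝ Set.univ g)
    (P : EuclideanSpace ℝ (Fin N) →L[ℝ] EuclideanSpace ℝ (Fin n))
    (R : EuclideanSpace ℝ (Fin n) →L[ℝ] EuclideanSpace ℝ (Fin N))
    (hR : R = ContinuousLinearMap.adjoint P)
    (yk : EuclideanSpace ℝ (Fin n))
    (xk : EuclideanSpace ℝ (Fin N)) (hxk : xk = R yk)
    (v : EuclideanSpace ℝ (Fin N)) (hv : v = R (gradient f yk) - gradient g xk)
    (ψ : EuclideanSpace ℝ (Fin N) → ℝ)
    (hψ : ∀ x, ψ x = g x + ⟪v, x - xk⟫)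
    (xplus : EuclideanSpace ℝ (Fin N)) (hxplus : ψ xplus < ψ xk)
    (d : EuclideanSpace ℝ (Fin n)) (hd : d = P (xplus - xk)) :
    ⟪gradient f yk, d⟫ ≤ ψ xplus - ψ xk ∧ ψ xplus - ψ xk < 0 :=
  coarse_correction_descent_direction_general n N f g hg hgconv P R hR yk xk v hv ψ hψ xplus hxplus
    d hd
end

section
/- Feasibility under prolongation (Lemma 2.2): if l ≤ y_k ≤ u componentwise, then for every x ∈ ℝ^N with l_{k,P} ≤ x ≤ u_{k,P} componentwise, one has l ≤ y_k + P(x − x_k) ≤ u componentwise. -/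
/-!
Write `d = x - x_k`. For a nonzero entry `P i j`, the coarse bounds give
`‖P‖_∞ d_j ∈ [l_i - y_i, u_i - y_i]` when `P i j > 0` and `‖P‖_∞ d_j ∈ [y_i - u_i, y_i - l_i]`
when `P i j < 0`; in both cases `|P i j| (l_i - y_i) ≤ ‖P‖_∞ P i j d_j ≤ |P i j| (u_i - y_i)`.
Summing over `j` and using `∑_j |P i j| ≤ ‖P‖_∞` together with `l_i - y_i ≤ 0 ≤ u_i - y_i`
gives `l_i - y_i ≤ (P d)_i ≤ u_i - y_i`.
-/

section CoarseBounds

variable {ι : Type*} {s : Finset ι} (hs : s.Nonempty) (f : ι → ℝ) {c x₀ x : ℝ}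

include hs in
theorem le_sub_mul_of_add_one_div_mul_sup'_le (hc : 0 < c)
    (h : x₀ + 1 / c * s.sup' hs f ≤ x) {i : ι} (hi : i ∈ s) : f i ≤ (x - x₀) * c := by
  have hsup : s.sup' hs f ≤ (x - x₀) * c := by
    rw [← div_le_iff₀ hc, div_eq_inv_mul, ← one_div]
    linarith
  exact (s.le_sup' f hi).trans hsup

include hs in
theorem sub_mul_le_of_le_add_one_div_mul_inf' (hc : 0 < c)
    (h : x ≤ x₀ + 1 / c * s.inf' hs f) {i : ι} (hi : i ∈ s) : (x - x₀) * c ≤ f i := by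
  have hinf : (x - x₀) * c ≤ s.inf' hs f := by
    rw [← le_div_iff₀ hc, div_eq_inv_mul, ← one_div]
    linarith
  exact hinf.trans (s.inf'_le f hi)

end CoarseBounds

theorem mul_mem_Icc_abs_mul_of_signed_bounds {p l u y t : ℝ}
    (hlo : (if 0 < p then l - y else y - u) ≤ t) (hhi : t ≤ (if 0 < p then u - y else y - l)) :
    p * t ∈ Set.Icc (|p| * (l - y)) (|p| * (u - y)) := by
  split_ifs at hlo hhi with hp
  · rw [abs_of_pos hp]
    exact ⟨by nlinarith, by nlinarith⟩
  · rw [abs_of_nonpos (not_lt.mp hp)]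
    exact ⟨by nlinarith, by nlinarith⟩

theorem sum_mul_mem_Icc_of_abs_mul_bounds {ι : Type*} [Fintype ι] {p d : ι → ℝ} {a b c : ℝ}
    (ha : a ≤ 0) (hb : 0 ≤ b) (hc : 0 < c) (hp : ∑ j, |p j| ≤ c)
    (hterm : ∀ j, p j * (d j * c) ∈ Set.Icc (|p j| * a) (|p j| * b)) :
    ∑ j, p j * d j ∈ Set.Icc a b := by
  have hsum_eq : ∑ j, p j * (d j * c) = (∑ j, p j * d j) * c := by
    rw [Finset.sum_mul]
    exact Finset.sum_congr rfl fun j _ => by ring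
  have hlo : (∑ j, |p j|) * a ≤ (∑ j, p j * d j) * c := by
    rw [← hsum_eq, Finset.sum_mul]
    exact Finset.sum_le_sum fun j _ => (hterm j).1
  have hhi : (∑ j, p j * d j) * c ≤ (∑ j, |p j|) * b := by
    rw [← hsum_eq, Finset.sum_mul]
    exact Finset.sum_le_sum fun j _ => (hterm j).2
  refine ⟨?_, ?_⟩
  · nlinarith [mul_le_mul_of_nonpos_right hp ha]
  · nlinarith [mul_le_mul_of_nonneg_right hp hb]

theorem feasibility_under_prolongation_general
    (n N : ℕ) (hn : 0 < n)
    (P : Matrix (Fin n) (Fin N) ℝ)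
    (hne : ∀ j, (Finset.filter (fun i => P i j ≠ 0) Finset.univ).Nonempty)
    (Pinf : ℝ)
    (hPinf : Pinf = Finset.univ.sup' (⟨⟨0, hn⟩, Finset.mem_univ _⟩ : (Finset.univ : Finset (Fin n)).Nonempty)
      (fun i => ∑ j, |P i j|))
    (hPpos : 0 < Pinf)
    (l u yk : Fin n → ℝ) (hly : ∀ i, l i ≤ yk i) (hyu : ∀ i, yk i ≤ u i)
    (xk : Fin N → ℝ)
    (lkP ukP : Fin N → ℝ)
    (hlkP : ∀ j, lkP j = xk j + (1 / Pinf) *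
      ((Finset.filter (fun i => P i j ≠ 0) Finset.univ).sup' (hne j)
        (fun i => if 0 < P i j then l i - yk i else yk i - u i)))
    (hukP : ∀ j, ukP j = xk j + (1 / Pinf) *
      ((Finset.filter (fun i => P i j ≠ 0) Finset.univ).inf' (hne j)
        (fun i => if 0 < P i j then u i - yk i else yk i - l i))) :
    ∀ x : Fin N → ℝ, (∀ j, lkP j ≤ x j ∧ x j ≤ ukP j) →
      ∀ i, l i ≤ yk i + ∑ j, P i j * (x j - xk j) ∧
        yk i + ∑ j, P i j * (x j - xk j) ≤ u i := by
  intro x hx i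
  have hrow : ∑ j, |P i j| ≤ Pinf :=
    hPinf ▸ Finset.le_sup' (fun i => ∑ j, |P i j|) (Finset.mem_univ i)
  have hterm : ∀ j, P i j * ((x j - xk j) * Pinf) ∈
      Set.Icc (|P i j| * (l i - yk i)) (|P i j| * (u i - yk i)) := by
    intro j
    by_cases hPij : P i j = 0
    · simp [hPij]
    have hi : i ∈ Finset.filter (fun i => P i j ≠ 0) Finset.univ := by simpa using hPij
    exact mul_mem_Icc_abs_mul_of_signed_bounds
      (le_sub_mul_of_add_one_div_mul_sup'_le (hne j) _ hPpos (hlkP j ▸ (hx j).1) hi)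
      (sub_mul_le_of_le_add_one_div_mul_inf' (hne j) _ hPpos (hukP j ▸ (hx j).2) hi)
  obtain ⟨hlo, hhi⟩ := sum_mul_mem_Icc_of_abs_mul_bounds (sub_nonpos.mpr (hly i))
    (sub_nonneg.mpr (hyu i)) hPpos hrow hterm
  constructor <;> linarith

/-- Feasibility under prolongation (Lemma 2.2): if `l ≤ y_k ≤ u` componentwise, then for
every `x` with `l_{k,P} ≤ x ≤ u_{k,P}` componentwise, one has
`l ≤ y_k + P(x − x_k) ≤ u` componentwise. -/
theorem feasibility_under_prolongation
    (n N : ℕ) (hn : 0 < n) (hN : 0 < N)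
    (P : Matrix (Fin n) (Fin N) ℝ)
    (hne : ∀ j, (Finset.filter (fun i => P i j ≠ 0) Finset.univ).Nonempty)
    (Pinf : ℝ)
    (hPinf : Pinf = Finset.univ.sup' (⟨⟨0, hn⟩, Finset.mem_univ _⟩ : (Finset.univ : Finset (Fin n)).Nonempty)
      (fun i => ∑ j, |P i j|))
    (hPpos : 0 < Pinf)
    (l u yk : Fin n → ℝ) (hly : ∀ i, l i ≤ yk i) (hyu : ∀ i, yk i ≤ u i)
    (xk : Fin N → ℝ)
    (lkP ukP : Fin N → ℝ)
    (hlkP : ∀ j, lkP j = xk j + (1 / Pinf) *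
      ((Finset.filter (fun i => P i j ≠ 0) Finset.univ).sup' (hne j)
        (fun i => if 0 < P i j then l i - yk i else yk i - u i)))
    (hukP : ∀ j, ukP j = xk j + (1 / Pinf) *
      ((Finset.filter (fun i => P i j ≠ 0) Finset.univ).inf' (hne j)
        (fun i => if 0 < P i j then u i - yk i else yk i - l i))) :
    ∀ x : Fin N → ℝ, (∀ j, lkP j ≤ x j ∧ x j ≤ ukP j) →
      ∀ i, l i ≤ yk i + ∑ j, P i j * (x j - xk j) ∧
        yk i + ∑ j, P i j * (x j - xk j) ≤ u i :=
  feasibility_under_prolongation_general n N hn P hne Pinf hPinf hPpos l u yk hly hyu xk lkP ukP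
    hlkP hukP
end

section
/- Armijo interval (Lemma 3.1, first part): let f : ℝ^n → ℝ be differentiable with M-Lipschitz gradient (M > 0), let ρ₁ ∈ (0, 1/2), let y ∈ ℝ^n, and let d ∈ ℝ^n be a descent direction for f at y, i.e. ⟨∇f(y), d⟩ < 0, with d ≠ 0. Then every step size α ∈ [0, α̂] with α̂ = 2(ρ₁ − 1)⟨∇f(y), d⟩ / (M‖d‖²) satisfies the Armijo condition f(y + α d) ≤ f(y) + ρ₁ α ⟨∇f(y), d⟩. -/
open scoped RealInnerProductSpace

/-! The descent lemma: along the ray `t ↦ y + t • d`, the Lipschitz bound on `∇f` makes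
`f (y + t • d) - t ⟪∇f y, d⟫ - M ‖d‖² t² / 2` nonincreasing, so `f` lies below the quadratic
model `f y + t ⟪∇f y, d⟫ + M ‖d‖² t² / 2`. For `α ≤ 2 (ρ₁ - 1) ⟪∇f y, d⟫ / (M ‖d‖²)` the
quadratic term is at most `(ρ₁ - 1) α ⟪∇f y, d⟫`, which is the Armijo condition. -/

section DescentLemma

variable {E : Type*} [NormedAddCommGroup E] [InnerProductSpace ℝ E] [CompleteSpace E]
  {f : E → ℝ} {M : ℝ}

theorem hasDerivAt_comp_add_smul (hf : Differentiable ℝ f) (y d : E) (t : ℝ) :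
    HasDerivAt (fun s : ℝ => f (y + s • d)) ⟪gradient f (y + t • d), d⟫ t := by
  have hline : HasDerivAt (fun s : ℝ => y + s • d) d t := by
    simpa using ((hasDerivAt_id t).smul_const d).const_add y
  exact (hf _).hasGradientAt.hasFDerivAt.comp_hasDerivAt t hline

theorem inner_gradient_add_smul_sub_le
    (hLip : ∀ x z, ‖gradient f x - gradient f z‖ ≤ M * ‖x - z‖) (y d : E) {t : ℝ} (ht : 0 ≤ t) :
    ⟪gradient f (y + t • d), d⟫ - ⟪gradient f y, d⟫ ≤ M * ‖d‖ ^ 2 * t :=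
  calc _ = ⟪gradient f (y + t • d) - gradient f y, d⟫ := (inner_sub_left ..).symm
    _ ≤ ‖gradient f (y + t • d) - gradient f y‖ * ‖d‖ := real_inner_le_norm _ _
    _ ≤ M * ‖y + t • d - y‖ * ‖d‖ := by gcongr; exact hLip _ _
    _ = M * ‖d‖ ^ 2 * t := by
      rw [add_sub_cancel_left, norm_smul, Real.norm_of_nonneg ht]; ring

theorem le_add_inner_gradient_add_sq_of_lipschitz_gradient (hf : Differentiable ℝ f)
    (hLip : ∀ x z, ‖gradient f x - gradient f z‖ ≤ M * ‖x - z‖) (y d : E) {t : ℝ} (ht : 0 ≤ t) :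
    f (y + t • d) ≤ f y + t * ⟪gradient f y, d⟫ + M * ‖d‖ ^ 2 * t ^ 2 / 2 := by
  set g := ⟪gradient f y, d⟫
  let φ : ℝ → ℝ := fun s => f (y + s • d) - s * g - M * ‖d‖ ^ 2 * s ^ 2 / 2
  have hφ : ∀ s, HasDerivAt φ (⟪gradient f (y + s • d), d⟫ - g - M * ‖d‖ ^ 2 * s) s := by
    intro s
    refine (((hasDerivAt_comp_add_smul hf y d s).sub ((hasDerivAt_id s).mul_const g)).sub
      (((hasDerivAt_pow 2 s).const_mul (M * ‖d‖ ^ 2)).div_const 2)).congr_deriv ?_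
    ring
  have hanti : AntitoneOn φ (Set.Ici 0) :=
    antitoneOn_of_hasDerivWithinAt_nonpos (convex_Ici 0)
      (fun s _ => (hφ s).continuousAt.continuousWithinAt) (fun s _ => (hφ s).hasDerivWithinAt)
      fun s hs => by
        rw [interior_Ici] at hs
        linarith [inner_gradient_add_smul_sub_le hLip y d hs.le]
  have hφt : φ t ≤ φ 0 := hanti Set.self_mem_Ici ht ht
  simp only [φ, zero_smul, add_zero] at hφt
  linarith

end DescentLemma

theorem armijo_interval_general
    (n : ℕ)
    (f : EuclideanSpace ℝ (Fin n) → ℝ) (hf : Differentiable ℝ f)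
    (M : ℝ) (hM : 0 < M)
    (hLip : ∀ x z, ‖gradient f x - gradient f z‖ ≤ M * ‖x - z‖)
    (ρ₁ : ℝ)
    (y d : EuclideanSpace ℝ (Fin n)) (hd : d ≠ 0)
    (α : ℝ) (hα : α ∈ Set.Icc 0 (2 * (ρ₁ - 1) * ⟪gradient f y, d⟫ / (M * ‖d‖^2))) :
    f (y + α • d) ≤ f y + ρ₁ * α * ⟪gradient f y, d⟫ := by
  obtain ⟨hα0, hαle⟩ := hα
  have hMd : 0 < M * ‖d‖ ^ 2 := by positivity
  have hstep : α * (M * ‖d‖ ^ 2) ≤ 2 * (ρ₁ - 1) * ⟪gradient f y, d⟫ := (le_div_iff₀ hMd).1 hαle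
  have hquad : M * ‖d‖ ^ 2 * α ^ 2 / 2 ≤ (ρ₁ - 1) * α * ⟪gradient f y, d⟫ := by
    nlinarith [mul_le_mul_of_nonneg_left hstep hα0]
  linarith [le_add_inner_gradient_add_sq_of_lipschitz_gradient hf hLip y d hα0]

/-- Armijo interval (Lemma 3.1, first part): if `∇f` is `M`-Lipschitz, `ρ₁ ∈ (0, 1/2)`,
and `d` is a descent direction at `y`, then every step size
`α ∈ [0, α̂]` with `α̂ = 2(ρ₁ − 1)⟪∇f(y), d⟫ / (M‖d‖²)` satisfies the Armijo condition. -/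
theorem armijo_interval
    (n : ℕ) (hn : 0 < n)
    (f : EuclideanSpace ℝ (Fin n) → ℝ) (hf : Differentiable ℝ f)
    (M : ℝ) (hM : 0 < M)
    (hLip : ∀ x z, ‖gradient f x - gradient f z‖ ≤ M * ‖x - z‖)
    (ρ₁ : ℝ) (hρ₁ : ρ₁ ∈ Set.Ioo (0 : ℝ) (1/2))
    (y d : EuclideanSpace ℝ (Fin n)) (hd : d ≠ 0)
    (hdesc : ⟪gradient f y, d⟫ < 0)
    (α : ℝ) (hα : α ∈ Set.Icc 0 (2 * (ρ₁ - 1) * ⟪gradient f y, d⟫ / (M * ‖d‖^2))) :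
    f (y + α • d) ≤ f y + ρ₁ * α * ⟪gradient f y, d⟫ :=
  armijo_interval_general n f hf M hM hLip ρ₁ y d hd α hα
end

section
/- Descent strength of the exact coarse step (inequality (A.1) in the proof of Lemma 3.2): suppose g is convex and differentiable, the coarse model ψ is m_g-strongly convex with M_g-Lipschitz gradient (0 < m_g ≤ M_g), R = Pᵀ, and x_* is the global minimizer of ψ over ℝ^N. Then the direction d = P(x_* − x_k) satisfies ⟨∇f(y_k), d⟩ ≤ −(m_g / (2 M_g²)) ‖∇ψ(x_k)‖². -/
open scoped RealInnerProductSpace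

/-! Since `R = Pᵀ`, `⟪∇f(y_k), P(x_* − x_k)⟫ = ⟪∇ψ(x_k), x_* − x_k⟫`, because the first-order
correction `v` makes `∇ψ(x_k) = R ∇f(y_k)`. Strong convexity of `ψ` together with
`ψ(x_*) ≤ ψ(x_k)` gives `⟪∇ψ(x_k), x_* − x_k⟫ ≤ −(m_g/2) ‖x_* − x_k‖²`, and since `∇ψ(x_*) = 0`
the Lipschitz bound gives `‖∇ψ(x_k)‖ ≤ M_g ‖x_* − x_k‖`. -/

open Set

section FirstOrder

variable {E : Type*} [NormedAddCommGroup E]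

theorem ConvexOn.hasFDerivAt_le_sub [NormedSpace ℝ E] {s : Set E} {φ : E → ℝ}
    {φ' : E →L[ℝ] ℝ} {x y : E} (hφ : ConvexOn ℝ s φ) (hx : x ∈ s) (hy : y ∈ s)
    (hφ' : HasFDerivAt φ φ' x) :
    φ' (y - x) ≤ φ y - φ x := by
  have hline : ConvexOn ℝ (Icc 0 1) (φ ∘ AffineMap.lineMap (k := ℝ) x y) :=
    (hφ.comp_affineMap _).subset (fun _ ht => hφ.1.lineMap_mem hx hy ht) (convex_Icc 0 1)
  have hderiv : HasDerivAt (φ ∘ AffineMap.lineMap (k := ℝ) x y) (φ' (y - x)) 0 := by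
    have hφ'0 : HasFDerivAt φ φ' (AffineMap.lineMap x y (0 : ℝ)) := by simpa using hφ'
    exact hφ'0.comp_hasDerivAt 0 AffineMap.hasDerivAt_lineMap
  simpa [slope] using hline.le_slope_of_hasDerivAt (left_mem_Icc.2 zero_le_one)
    (right_mem_Icc.2 zero_le_one) one_pos hderiv

variable [InnerProductSpace ℝ E] [CompleteSpace E]

theorem StrongConvexOn.inner_add_le_sub_of_hasGradientAt {s : Set E} {m : ℝ} {ψ : E → ℝ}
    {G x y : E} (hψ : StrongConvexOn s m ψ) (hx : x ∈ s) (hy : y ∈ s)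
    (hG : HasGradientAt ψ G x) :
    ⟪G, y - x⟫ + m / 2 * ‖y - x‖ ^ 2 ≤ ψ y - ψ x := by
  have hshift : HasGradientAt (fun z => ψ z - m / 2 * ‖z‖ ^ 2) (G - m • x) x := by
    rw [hasGradientAt_iff_hasFDerivAt] at hG ⊢
    refine (hG.sub ((hasStrictFDerivAt_norm_sq x).hasFDerivAt.const_mul (m / 2))).congr_fderiv ?_
    ext z
    simp only [sub_apply, InnerProductSpace.toDual_apply_apply, smul_apply, coe_innerSL_apply,
      nsmul_eq_mul, Nat.cast_ofNat, smul_eq_mul, map_sub, map_smul, sub_right_inj]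
    ring
  have h := (strongConvexOn_iff_convex.mp hψ).hasFDerivAt_le_sub hx hy
    (hasGradientAt_iff_hasFDerivAt.mp hshift)
  rw [InnerProductSpace.toDual_apply_apply, inner_sub_left, real_inner_smul_left] at h
  have hnorm_y : ‖y‖ ^ 2 = ‖x‖ ^ 2 + 2 * ⟪x, y - x⟫ + ‖y - x‖ ^ 2 := by
    simpa using norm_add_sq_real x (y - x)
  rw [hnorm_y] at h
  linarith

theorem StrongConvexOn.inner_sub_le_neg_mul_sq_norm {m M : ℝ} {ψ : E → ℝ} {G x y : E}
    (hψ : StrongConvexOn univ m ψ) (hm : 0 ≤ m) (hG : HasGradientAt ψ G x) (hyx : ψ y ≤ ψ x)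
    (hGM : ‖G‖ ≤ M * ‖x - y‖) :
    ⟪G, y - x⟫ ≤ -(m / (2 * M ^ 2)) * ‖G‖ ^ 2 := by
  have hdescent : ⟪G, y - x⟫ ≤ -(m / 2) * ‖y - x‖ ^ 2 := by
    linarith [hψ.inner_add_le_sub_of_hasGradientAt (mem_univ x) (mem_univ y) hG]
  have hGsq : ‖G‖ ^ 2 ≤ M ^ 2 * ‖y - x‖ ^ 2 := by
    rw [← mul_pow, norm_sub_rev]
    exact pow_le_pow_left₀ (norm_nonneg G) hGM 2
  -- `≤ 1` rather than `= 1`: when `M = 0` the claimed bound degenerates to `⟪G, y - x⟫ ≤ 0`.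
  have hM : M ^ 2 / M ^ 2 ≤ 1 := div_self_le_one _
  calc ⟪G, y - x⟫ ≤ -(m / 2) * ‖y - x‖ ^ 2 := hdescent
    _ ≤ -(m / 2) * (M ^ 2 / M ^ 2) * ‖y - x‖ ^ 2 := by
      nlinarith [mul_nonneg (by positivity : 0 ≤ m / 2 * ‖y - x‖ ^ 2) (sub_nonneg.2 hM)]
    _ = -(m / (2 * M ^ 2)) * (M ^ 2 * ‖y - x‖ ^ 2) := by ring
    _ ≤ -(m / (2 * M ^ 2)) * ‖G‖ ^ 2 :=
      mul_le_mul_of_nonpos_left hGsq (neg_nonpos.2 (by positivity))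

theorem HasGradientAt.add_inner_sub {g : E → ℝ} {G x : E} (hg : HasGradientAt g G x) (v c : E) :
    HasGradientAt (fun z => g z + ⟪v, z - c⟫) (G + v) x := by
  rw [hasGradientAt_iff_hasFDerivAt] at hg ⊢
  have hlin : HasFDerivAt (fun z => ⟪v, z - c⟫) (innerSL ℝ v) x := by
    simpa only [innerSL_apply_apply, inner_sub_right] using
      (innerSL ℝ v).hasFDerivAt.sub_const (innerSL ℝ v c)
  rw [map_add]
  exact hg.add hlin

theorem IsLocalMin.hasGradientAt_eq_zero {f : E → ℝ} {G x : E} (h : IsLocalMin f x)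
    (hG : HasGradientAt f G x) : G = 0 := by
  simpa using h.hasFDerivAt_eq_zero (hasGradientAt_iff_hasFDerivAt.mp hG)

end FirstOrder

theorem coarse_step_descent_strength_general
    (n N : ℕ)
    (f : EuclideanSpace ℝ (Fin n) → ℝ) (g : EuclideanSpace ℝ (Fin N) → ℝ)
    (hg : Differentiable ℝ g)
    (P : EuclideanSpace ℝ (Fin N) →L[ℝ] EuclideanSpace ℝ (Fin n))
    (R : EuclideanSpace ℝ (Fin n) →L[ℝ] EuclideanSpace ℝ (Fin N))
    (hR : R = ContinuousLinearMap.adjoint P)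
    (yk : EuclideanSpace ℝ (Fin n))
    (xk : EuclideanSpace ℝ (Fin N))
    (v : EuclideanSpace ℝ (Fin N)) (hv : v = R (gradient f yk) - gradient g xk)
    (ψ : EuclideanSpace ℝ (Fin N) → ℝ)
    (hψ : ∀ x, ψ x = g x + ⟪v, x - xk⟫)
    (mg Mg : ℝ) (hmg : 0 < mg)
    (hstrong : ConvexOn ℝ Set.univ (fun x => ψ x - mg / 2 * ‖x‖^2))
    (hLipψ : ∀ x z, ‖gradient ψ x - gradient ψ z‖ ≤ Mg * ‖x - z‖)
    (xstar : EuclideanSpace ℝ (Fin N)) (hxstar : ∀ x, ψ xstar ≤ ψ x)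
    (d : EuclideanSpace ℝ (Fin n)) (hd : d = P (xstar - xk)) :
    ⟪gradient f yk, d⟫ ≤ -(mg / (2 * Mg^2)) * ‖gradient ψ xk‖^2 := by
  have hψgrad : ∀ x, HasGradientAt ψ (gradient g x + v) x := fun x => by
    rw [show ψ = _ from funext hψ]
    exact (hg x).hasGradientAt.add_inner_sub v xk
  have hgrad_xk : gradient ψ xk = R (gradient f yk) := by
    rw [(hψgrad xk).gradient, hv]
    abel
  have hmin : IsLocalMin ψ xstar := Filter.Eventually.of_forall hxstar
  have hgrad_xstar : gradient ψ xstar = 0 :=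
    hmin.hasGradientAt_eq_zero (hψgrad xstar).differentiableAt.hasGradientAt
  have hpair : ⟪gradient f yk, d⟫ = ⟪gradient ψ xk, xstar - xk⟫ := by
    rw [hd, hgrad_xk, hR, ContinuousLinearMap.adjoint_inner_left]
  rw [hpair]
  exact (strongConvexOn_iff_convex.mpr hstrong).inner_sub_le_neg_mul_sq_norm hmg.le
    (hψgrad xk).differentiableAt.hasGradientAt (hxstar xk)
    (by simpa [hgrad_xstar] using hLipψ xk xstar)

/-- Descent strength of the exact coarse step (inequality (A.1) in the proof of Lemma 3.2):
if `g` is convex, the coarse model `ψ` is `m_g`-strongly convex with `M_g`-Lipschitz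
gradient, `R = Pᵀ`, and `x_*` is the global minimizer of `ψ`, then the direction
`d = P(x_* − x_k)` satisfies `⟪∇f(y_k), d⟫ ≤ −(m_g / (2 M_g²)) ‖∇ψ(x_k)‖²`. -/
theorem coarse_step_descent_strength
    (n N : ℕ) (hn : 0 < n) (hN : 0 < N)
    (f : EuclideanSpace ℝ (Fin n) → ℝ) (g : EuclideanSpace ℝ (Fin N) → ℝ)
    (hf : Differentiable ℝ f) (hg : Differentiable ℝ g)
    (hgconv : ConvexOn ℝ Set.univ g)
    (P : EuclideanSpace ℝ (Fin N) →L[ℝ] EuclideanSpace ℝ (Fin n))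
    (R : EuclideanSpace ℝ (Fin n) →L[ℝ] EuclideanSpace ℝ (Fin N))
    (hR : R = ContinuousLinearMap.adjoint P)
    (yk : EuclideanSpace ℝ (Fin n))
    (xk : EuclideanSpace ℝ (Fin N)) (hxk : xk = R yk)
    (v : EuclideanSpace ℝ (Fin N)) (hv : v = R (gradient f yk) - gradient g xk)
    (ψ : EuclideanSpace ℝ (Fin N) → ℝ)
    (hψ : ∀ x, ψ x = g x + ⟪v, x - xk⟫)
    (mg Mg : ℝ) (hmg : 0 < mg) (hmgMg : mg ≤ Mg)
    (hstrong : ConvexOn ℝ Set.univ (fun x => ψ x - mg / 2 * ‖x‖^2))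
    (hLipψ : ∀ x z, ‖gradient ψ x - gradient ψ z‖ ≤ Mg * ‖x - z‖)
    (xstar : EuclideanSpace ℝ (Fin N)) (hxstar : ∀ x, ψ xstar ≤ ψ x)
    (d : EuclideanSpace ℝ (Fin n)) (hd : d = P (xstar - xk)) :
    ⟪gradient f yk, d⟫ ≤ -(mg / (2 * Mg^2)) * ‖gradient ψ xk‖^2 :=
  coarse_step_descent_strength_general n N f g hg P R hR yk xk v hv ψ hψ mg Mg hmg hstrong hLipψ
    xstar hxstar d hd
end

section
/- Lipschitz constant of the gradient of the regularized tomography objective: let A be an m × n real matrix, b ∈ ℝ^m, D a p × n real matrix, λ > 0, ρ > 0, and define f : ℝ^n → ℝ by f(y) = (1/2)‖Ay − b‖² + λ Σ_{i=1}^p (√(ρ² + (Dy)_i²) − ρ). Then f is differentiable and ∇f is Lipschitz continuous with constant ‖A‖² + (λ/ρ)‖D‖², where ‖A‖ and ‖D‖ denote operator (spectral) norms; in particular, if ‖D‖² ≤ 8, then ∇f is Lipschitz with constant ‖A‖² + 8λ/ρ. -/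
/-!
The gradient of `y ↦ h (S y)` for a linear map `S` is `y ↦ S† (∇h (S y))`, so a `K`-Lipschitz
`∇h` gives a `‖S‖² K`-Lipschitz gradient. Both terms of the objective are of this form with a
separable `h u = ∑ᵢ φᵢ (uᵢ)`, whose gradient `(φᵢ' (uᵢ))ᵢ` is as Lipschitz as the `φᵢ'`: for
`½ (t - bᵢ)²` the constant is `1`, and for the pseudo-Huber function `φ' t = t / √(ρ² + t²)`,
whose derivative `ρ² / (ρ² + t²)^{3/2}` is at most `1 / ρ`.
-/

open ContinuousLinearMap InnerProductSpace

section GradientCalculus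

variable {E F : Type*} [NormedAddCommGroup E] [InnerProductSpace ℝ E] [CompleteSpace E]
  [NormedAddCommGroup F] [InnerProductSpace ℝ F] [CompleteSpace F]

theorem HasGradientAt.add {f g : E → ℝ} {f' g' : E} {x : E} (hf : HasGradientAt f f' x)
    (hg : HasGradientAt g g' x) : HasGradientAt (fun y => f y + g y) (f' + g') x := by
  rw [hasGradientAt_iff_hasFDerivAt] at *
  simpa only [map_add] using hf.fun_add hg

theorem HasGradientAt.const_mul {f : E → ℝ} {f' : E} {x : E} (hf : HasGradientAt f f' x)
    (c : ℝ) : HasGradientAt (fun y => c * f y) (c • f') x := by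
  rw [hasGradientAt_iff_hasFDerivAt] at *
  simpa only [map_smulₛₗ, RCLike.conj_to_real, smul_eq_mul] using hf.const_mul c

theorem HasGradientAt.comp_continuousLinearMap {h : F → ℝ} {g : F} (S : E →L[ℝ] F) {x : E}
    (hh : HasGradientAt h g (S x)) : HasGradientAt (fun y => h (S y)) (adjoint S g) x := by
  rw [hasGradientAt_iff_hasFDerivAt] at *
  refine (hh.comp x S.hasFDerivAt).congr_fderiv ?_
  ext v
  simp [adjoint_inner_left]

theorem LipschitzWith.adjoint_comp_comp {K : NNReal} {g : F → F} (hg : LipschitzWith K g)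
    (S : E →L[ℝ] F) : LipschitzWith (‖S‖₊ * K * ‖S‖₊) (fun x => adjoint S (g (S x))) := by
  have := ((adjoint S).lipschitz.comp hg).comp S.lipschitz
  rwa [LinearIsometryEquiv.nnnorm_map] at this

end GradientCalculus

section Separable

variable {ι : Type*} [Fintype ι]

theorem hasGradientAt_sum_apply {φ φ' : ι → ℝ → ℝ} (hφ : ∀ i t, HasDerivAt (φ i) (φ' i t) t)
    (u : EuclideanSpace ℝ ι) :
    HasGradientAt (fun v : EuclideanSpace ℝ ι => ∑ i, φ i (v i))
      (WithLp.toLp 2 fun i => φ' i (u i)) u := by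
  rw [hasGradientAt_iff_hasFDerivAt]
  refine (HasFDerivAt.fun_sum fun i _ =>
    (hφ i (u i)).comp_hasFDerivAt u (EuclideanSpace.proj (𝕜 := ℝ) i).hasFDerivAt).congr_fderiv ?_
  ext v
  simp [PiLp.inner_apply, mul_comm]

theorem lipschitzWith_toLp_apply {K : NNReal} {g : ι → ℝ → ℝ} (hg : ∀ i, LipschitzWith K (g i)) :
    LipschitzWith K (fun v : EuclideanSpace ℝ ι => WithLp.toLp 2 fun i => g i (v i)) := by
  refine LipschitzWith.of_dist_le_mul fun u w => ?_
  rw [EuclideanSpace.dist_eq, EuclideanSpace.dist_eq, ← Real.sqrt_sq K.coe_nonneg,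
    ← Real.sqrt_mul (sq_nonneg _), Finset.mul_sum]
  gcongr with i
  rw [← mul_pow]
  exact pow_le_pow_left₀ dist_nonneg ((hg i).dist_le_mul _ _) 2

end Separable

section PseudoHuber

noncomputable def pseudoHuber (ρ t : ℝ) : ℝ := √(ρ ^ 2 + t ^ 2) - ρ

variable {ρ : ℝ}

theorem hasDerivAt_sqrt_sq_add_sq (hρ : ρ ≠ 0) (t : ℝ) :
    HasDerivAt (fun s => √(ρ ^ 2 + s ^ 2)) (t / √(ρ ^ 2 + t ^ 2)) t := by
  have hpos : 0 < ρ ^ 2 + t ^ 2 := by positivity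
  convert ((hasDerivAt_pow 2 t).const_add (ρ ^ 2)).sqrt hpos.ne' using 1
  field_simp
  norm_num
  ring

theorem hasDerivAt_pseudoHuber (hρ : ρ ≠ 0) (t : ℝ) :
    HasDerivAt (pseudoHuber ρ) (t / √(ρ ^ 2 + t ^ 2)) t :=
  (hasDerivAt_sqrt_sq_add_sq hρ t).sub_const ρ

theorem hasDerivAt_div_sqrt_sq_add_sq (hρ : ρ ≠ 0) (t : ℝ) :
    HasDerivAt (fun s => s / √(ρ ^ 2 + s ^ 2)) (ρ ^ 2 / √(ρ ^ 2 + t ^ 2) ^ 3) t := by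
  have hpos : 0 < ρ ^ 2 + t ^ 2 := by positivity
  have hsq : √(ρ ^ 2 + t ^ 2) ^ 2 = ρ ^ 2 + t ^ 2 := Real.sq_sqrt hpos.le
  have hne : √(ρ ^ 2 + t ^ 2) ≠ 0 := (Real.sqrt_pos.mpr hpos).ne'
  refine ((hasDerivAt_id' t).fun_div (hasDerivAt_sqrt_sq_add_sq hρ t) hne).congr_deriv ?_
  field_simp
  linarith

theorem lipschitzWith_div_sqrt_sq_add_sq (hρ : ρ ≠ 0) :
    LipschitzWith ‖ρ‖₊⁻¹ (fun s => s / √(ρ ^ 2 + s ^ 2)) := by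
  refine lipschitzWith_of_nnnorm_deriv_le
    (fun t => (hasDerivAt_div_sqrt_sq_add_sq hρ t).differentiableAt) fun t => ?_
  rw [(hasDerivAt_div_sqrt_sq_add_sq hρ t).deriv, ← NNReal.coe_le_coe, coe_nnnorm,
    NNReal.coe_inv, coe_nnnorm, Real.norm_eq_abs, Real.norm_eq_abs, abs_of_nonneg (by positivity)]
  have habs : |ρ| ≤ √(ρ ^ 2 + t ^ 2) := by
    rw [← Real.sqrt_sq_eq_abs]; gcongr; nlinarith
  have hρ' : 0 < |ρ| := abs_pos.mpr hρ
  rw [div_le_iff₀ (by positivity)]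
  calc ρ ^ 2 = |ρ|⁻¹ * |ρ| ^ 3 := by field_simp; exact (sq_abs ρ).symm
    _ ≤ |ρ|⁻¹ * √(ρ ^ 2 + t ^ 2) ^ 3 := by gcongr

end PseudoHuber

theorem tomography_objective_gradient_lipschitz_general
    (m n p : ℕ)
    (A : Matrix (Fin m) (Fin n) ℝ) (b : Fin m → ℝ)
    (D : Matrix (Fin p) (Fin n) ℝ)
    (lam ρ : ℝ) (hlam : 0 < lam) (hρ : 0 < ρ)
    (f : EuclideanSpace ℝ (Fin n) → ℝ)
    (hf : ∀ y, f y = (1/2) * ∑ i, ((∑ j, A i j * y j) - b i)^2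
      + lam * ∑ i, (Real.sqrt (ρ^2 + (∑ j, D i j * y j)^2) - ρ))
    (nA nD : ℝ)
    (hnA : nA = ‖LinearMap.toContinuousLinearMap (Matrix.toEuclideanLin A)‖)
    (hnD : nD = ‖LinearMap.toContinuousLinearMap (Matrix.toEuclideanLin D)‖) :
    Differentiable ℝ f ∧
    (∀ x z, ‖gradient f x - gradient f z‖ ≤ (nA^2 + (lam / ρ) * nD^2) * ‖x - z‖) ∧
    (nD^2 ≤ 8 →
      ∀ x z, ‖gradient f x - gradient f z‖ ≤ (nA^2 + 8 * lam / ρ) * ‖x - z‖) := by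
  set T := LinearMap.toContinuousLinearMap (Matrix.toEuclideanLin A)
  set S := LinearMap.toContinuousLinearMap (Matrix.toEuclideanLin D)
  set G : EuclideanSpace ℝ (Fin n) → EuclideanSpace ℝ (Fin n) := fun y =>
    (1 / 2 : ℝ) • adjoint T (WithLp.toLp 2 fun i => 2 * (T y i - b i))
      + lam • adjoint S (WithLp.toLp 2 fun i => S y i / √(ρ ^ 2 + S y i ^ 2))
  have hgrad : ∀ y, HasGradientAt f (G y) y := by
    intro y
    have hquad := hasGradientAt_sum_apply
      (φ := fun i t => (t - b i) ^ 2) (φ' := fun i t => 2 * (t - b i))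
      (fun i t => by simpa using ((hasDerivAt_id' t).sub_const (b i)).fun_pow 2) (T y)
    have hhuber := hasGradientAt_sum_apply (φ := fun _ => pseudoHuber ρ)
      (fun _ => hasDerivAt_pseudoHuber hρ.ne') (S y)
    rw [show f = fun y => (1 / 2) * ∑ i, (T y i - b i) ^ 2 + lam * ∑ i, pseudoHuber ρ (S y i)
      from funext hf]
    exact ((hquad.comp_continuousLinearMap T).const_mul _).add
      ((hhuber.comp_continuousLinearMap S).const_mul _)
  have hquad_lip (c : ℝ) : LipschitzWith 2 (fun t : ℝ => 2 * (t - c)) :=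
    LipschitzWith.of_dist_le_mul fun s t => by
      simp only [Real.dist_eq, ← mul_sub, sub_sub_sub_cancel_right, abs_mul]; norm_num
  have hlip := ((lipschitzWith_smul (1 / 2 : ℝ)).comp
      ((lipschitzWith_toLp_apply fun i => hquad_lip (b i)).adjoint_comp_comp T)).add
    ((lipschitzWith_smul lam).comp ((lipschitzWith_toLp_apply
      fun _ => lipschitzWith_div_sqrt_sq_add_sq hρ.ne').adjoint_comp_comp S))
  have hbound : ∀ x z, ‖gradient f x - gradient f z‖ ≤ (nA^2 + (lam / ρ) * nD^2) * ‖x - z‖ := by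
    intro x z
    rw [(hgrad x).gradient, (hgrad z).gradient, ← dist_eq_norm, ← dist_eq_norm]
    refine (hlip.dist_le_mul x z).trans_eq ?_
    push_cast
    rw [hnA, hnD, Real.norm_of_nonneg one_half_pos.le, Real.norm_of_nonneg hlam.le,
      Real.norm_of_nonneg hρ.le]
    ring
  refine ⟨fun x => (hgrad x).differentiableAt, hbound, fun hD8 x z => (hbound x z).trans ?_⟩
  rw [mul_div_assoc, mul_comm 8]
  gcongr

/-- Lipschitz constant of the gradient of the regularized tomography objective:
for `f(y) = (1/2)‖Ay − b‖² + λ Σᵢ (√(ρ² + (Dy)ᵢ²) − ρ)`, the gradient `∇f` is Lipschitz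
with constant `‖A‖² + (λ/ρ)‖D‖²` (operator/spectral norms); in particular, if `‖D‖² ≤ 8`,
then `∇f` is Lipschitz with constant `‖A‖² + 8λ/ρ`. -/
theorem tomography_objective_gradient_lipschitz
    (m n p : ℕ) (hm : 0 < m) (hn : 0 < n) (hp : 0 < p)
    (A : Matrix (Fin m) (Fin n) ℝ) (b : Fin m → ℝ)
    (D : Matrix (Fin p) (Fin n) ℝ)
    (lam ρ : ℝ) (hlam : 0 < lam) (hρ : 0 < ρ)
    (f : EuclideanSpace ℝ (Fin n) → ℝ)
    (hf : ∀ y, f y = (1/2) * ∑ i, ((∑ j, A i j * y j) - b i)^2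
      + lam * ∑ i, (Real.sqrt (ρ^2 + (∑ j, D i j * y j)^2) - ρ))
    (nA nD : ℝ)
    (hnA : nA = ‖LinearMap.toContinuousLinearMap (Matrix.toEuclideanLin A)‖)
    (hnD : nD = ‖LinearMap.toContinuousLinearMap (Matrix.toEuclideanLin D)‖) :
    Differentiable ℝ f ∧
    (∀ x z, ‖gradient f x - gradient f z‖ ≤ (nA^2 + (lam / ρ) * nD^2) * ‖x - z‖) ∧
    (nD^2 ≤ 8 →
      ∀ x z, ‖gradient f x - gradient f z‖ ≤ (nA^2 + 8 * lam / ρ) * ‖x - z‖) :=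
  tomography_objective_gradient_lipschitz_general m n p A b D lam ρ hlam hρ f hf nA nD hnA hnD
end
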